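/- Let R = k⟦x,y⟧/(x²) where k is a field. Then the annihilator of the stable endomorphism module of the module R/xR equals the ideal xR. -/

import Mathlib

open CategoryTheory IsLocalRing

universe u

variable (R : Type u) [CommRing R]

/-- The submodule of `Hom_R(M,N)` consisting of maps factoring through a projective module. -/
def projStable (M N : Type u) [AddCommGroup M] [Module R M] [AddCommGroup N] [Module R N] :
    Submodule R (M →ₗ[R] N) where
  carrier := {f | ∃ (P : Type u) (_ : AddCommGroup P) (_ : Module R P)
    (_ : Module.Projective R P) (g : M →ₗ[R] P) (h : P →ₗ[R] N), f = h.comp g}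
  zero_mem' := ⟨PUnit, inferInstance, inferInstance, inferInstance, 0, 0, by ext x; simp⟩
  add_mem' := by
    rintro f f' ⟨P, _, _, _, g, h, rfl⟩ ⟨P', _, _, _, g', h', rfl⟩
    exact ⟨P × P', inferInstance, inferInstance, inferInstance, g.prod g',
      h.comp (LinearMap.fst R P P') + h'.comp (LinearMap.snd R P P'), by ext x; simp⟩
  smul_mem' := by
    rintro r f ⟨P, _, _, _, g, h, rfl⟩
    exact ⟨P, inferInstance, inferInstance, inferInstance, g, r • h, by ext x; simp⟩

/-- The stable hom module `Hom_R(M,N)/P_R(M,N)`. -/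
def stableHom (M N : Type u) [AddCommGroup M] [Module R M] [AddCommGroup N] [Module R N] :=
  (M →ₗ[R] N) ⧸ projStable R M N

noncomputable instance (M N : Type u) [AddCommGroup M] [Module R M] [AddCommGroup N]
    [Module R N] : AddCommGroup (stableHom R M N) :=
  inferInstanceAs (AddCommGroup ((M →ₗ[R] N) ⧸ projStable R M N))

noncomputable instance (M N : Type u) [AddCommGroup M] [Module R M] [AddCommGroup N]
    [Module R N] : Module R (stableHom R M N) :=
  inferInstanceAs (Module R ((M →ₗ[R] N) ⧸ projStable R M N))

/-- `Ann(M)`: the annihilator of the stable endomorphism module of `M`. -/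
noncomputable def stAnn (M : Type u) [AddCommGroup M] [Module R M] : Ideal R :=
  Module.annihilator R (stableHom R M M)

/-- `Ext_R^n(M,N)` as an `R`-module. -/
noncomputable abbrev ExtM (n : ℕ) (M : ModuleCat.{u} R) (N : ModuleCat.{u} R) :
    ModuleCat.{u} R :=
  ((Ext R (ModuleCat.{u} R) n).obj (Opposite.op M)).obj N

/-- `ca^n(R)`, the `n`-th cohomology annihilator ideal. -/
noncomputable def ca (n : ℕ) : Ideal R :=
  ⨅ (m : ℕ) (_ : n ≤ m) (M : ModuleCat.{u} R) (N : ModuleCat.{u} R)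
    (_ : Module.Finite R M) (_ : Module.Finite R N),
    Module.annihilator R (ExtM R m M N)


/-- The one-dimensional A-infinity hypersurface `k⟦x,y⟧/(x²)`. -/
noncomputable abbrev Ainf (k : Type u) [Field k] : Type u :=
  (MvPowerSeries (Fin 2) k) ⧸
    (Ideal.span {(MvPowerSeries.X (0 : Fin 2) : MvPowerSeries (Fin 2) k) ^ 2})

/-- The image of `x` in `k⟦x,y⟧/(x²)`. -/
noncomputable def ax (k : Type u) [Field k] : Ainf k :=
  Ideal.Quotient.mk _ (MvPowerSeries.X 0)

/-- The image of `y` in `k⟦x,y⟧/(x²)`. -/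
noncomputable def ay (k : Type u) [Field k] : Ainf k :=
  Ideal.Quotient.mk _ (MvPowerSeries.X 1)

/-! Since `x` kills `R/xR`, it kills all of its endomorphisms. Conversely, if `r • id` factors
as `h ∘ g` through a projective `P`, then `g 1̄` is `x`-torsion in the flat module `P`; by the
equational criterion for flatness it is a combination with coefficients in `ann(x) = xR`, which
`h` sends to `0` because `xR` kills `R/xR`. Hence `r • 1̄ = 0`, that is `r ∈ xR`. -/

section StableAnnihilator

variable {R}

theorem Module.Flat.exists_eq_sum_smul_of_smul_eq_zero {P : Type*} [AddCommGroup P] [Module R P]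
    [Module.Flat R P] {a : R} {p : P} (h : a • p = 0) :
    ∃ (n : ℕ) (b : Fin n → R) (y : Fin n → P), p = ∑ j, b j • y j ∧ ∀ j, a * b j = 0 := by
  obtain ⟨n, b, y, hp, hb⟩ := isTrivialRelation_of_sum_smul_eq_zero (f := fun _ : Unit ↦ a)
    (x := fun _ ↦ p) (by simpa using h)
  exact ⟨n, b (), y, hp (), by simpa using hb⟩

theorem apply_eq_zero_of_mem_projStable {M N : Type u} [AddCommGroup M] [Module R M]
    [AddCommGroup N] [Module R N] {a : R} (hN : ∀ b, a * b = 0 → b ∈ Module.annihilator R N)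
    {f : M →ₗ[R] N} (hf : f ∈ projStable R M N) {m : M} (hm : a • m = 0) : f m = 0 := by
  obtain ⟨P, _, _, _, g, h, rfl⟩ := hf
  have hgm : a • g m = 0 := by rw [← map_smul, hm, map_zero]
  obtain ⟨n, b, y, hsum, hb⟩ := Module.Flat.exists_eq_sum_smul_of_smul_eq_zero hgm
  simp only [LinearMap.comp_apply, hsum, map_sum, map_smul]
  exact Finset.sum_eq_zero fun j _ ↦ Module.mem_annihilator.mp (hN _ (hb j)) _

theorem annihilator_le_stAnn (M : Type u) [AddCommGroup M] [Module R M] :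
    Module.annihilator R M ≤ stAnn R M := by
  intro r hr
  refine Module.mem_annihilator.mpr fun f ↦ ?_
  obtain ⟨f, rfl⟩ := Submodule.Quotient.mk_surjective _ f
  have hrf : r • f = 0 := LinearMap.ext fun m ↦ Module.mem_annihilator.mp hr (f m)
  change (Submodule.Quotient.mk (r • f) : (M →ₗ[R] M) ⧸ projStable R M M) = 0
  rw [hrf, Submodule.Quotient.mk_zero]

theorem stAnn_quotient_span_singleton_le {a : R} (ha : ∀ b, a * b = 0 → b ∈ Ideal.span {a}) :
    stAnn R (R ⧸ Ideal.span {a}) ≤ Ideal.span {a} := by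
  intro r hr
  have hid : r • LinearMap.id ∈ projStable R (R ⧸ Ideal.span {a}) (R ⧸ Ideal.span {a}) :=
    (Submodule.Quotient.mk_eq_zero _).mp
      (Module.mem_annihilator.mp hr (Submodule.Quotient.mk LinearMap.id))
  have hN (b : R) (hb : a * b = 0) : b ∈ Module.annihilator R (R ⧸ Ideal.span {a}) := by
    rw [Ideal.annihilator_quotient]
    exact ha b hb
  have h1 : a • Submodule.Quotient.mk (p := Ideal.span {a}) (1 : R) = 0 := by
    rw [← Submodule.Quotient.mk_smul, Submodule.Quotient.mk_eq_zero, smul_eq_mul, mul_one]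
    exact Ideal.mem_span_singleton_self a
  have := apply_eq_zero_of_mem_projStable hN hid h1
  rwa [LinearMap.smul_apply, LinearMap.id_apply, ← Submodule.Quotient.mk_smul,
    Submodule.Quotient.mk_eq_zero, smul_eq_mul, mul_one] at this

end StableAnnihilator

theorem mem_span_ax_of_ax_mul_eq_zero (k : Type u) [Field k] {a : Ainf k} (h : ax k * a = 0) :
    a ∈ Ideal.span {ax k} := by
  obtain ⟨A, rfl⟩ := Ideal.Quotient.mk_surjective a
  rw [ax, ← map_mul, Ideal.Quotient.eq_zero_iff_mem, Ideal.mem_span_singleton'] at h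
  obtain ⟨B, hB⟩ := h
  have hX : (MvPowerSeries.X (0 : Fin 2) : MvPowerSeries (Fin 2) k) ≠ 0 := by
    intro h0
    have := congrArg (MvPowerSeries.coeff (Finsupp.single (0 : Fin 2) 1)) h0
    simp [MvPowerSeries.coeff_X] at this
  have hA : A = MvPowerSeries.X 0 * B := by
    apply mul_left_cancel₀ hX
    rw [← hB]; ring
  rw [hA, Ideal.mem_span_singleton]
  exact ⟨Ideal.Quotient.mk _ B, by rw [ax, ← map_mul]⟩

theorem stmt6 (k : Type u) [Field k] :
    stAnn (Ainf k) ((Ainf k) ⧸ (Ideal.span {ax k} : Ideal (Ainf k)))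
      = Ideal.span {ax k} := by
  refine le_antisymm (stAnn_quotient_span_singleton_le fun _ ↦ mem_span_ax_of_ax_mul_eq_zero k) ?_
  simpa only [Ideal.annihilator_quotient] using
    annihilator_le_stAnn (R := Ainf k) (Ainf k ⧸ Ideal.span {ax k})
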